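/- arXiv:2507.16553 — 6 statements merged into one kernel-verified Lean document; each statement's English description precedes it below -/
import Mathlib

section
/- Let Q, A, D, Y be real matrices of compatible dimensions with Q symmetric positive definite, ν > 0, ε > 0, μ ≥ 0, and suppose the block matrix [[QA + AᵀQ − YD − DᵀYᵀ + (νμ² + 2ε)I, Q], [Q, −νI]] is negative semidefinite. Then, with L = Q⁻¹Y, for every scalar s with |s| ≤ μ/‖B‖ (equivalently for every admissible saturated input) and every ε-vector e ∈ ℝⁿ: eᵀ(Q(A − LD) + (A − LD)ᵀQ)e + 2s·eᵀQBe ≤ −2ε‖e‖², whenever ‖B‖·|s| ≤ μ. -/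
/-!
By the Schur complement, the LMI says that
`eᵀ (QA + AᵀQ - YD - DᵀYᵀ) e + (νμ² + 2ε) ‖e‖² + ν⁻¹ ‖Qe‖² ≤ 0`, and with `L = Q⁻¹Y` the
first term is the Lyapunov derivative of the observer error. Young's inequality bounds the
bilinear cross term by `2s⟨Qe, Be⟩ ≤ ν⁻¹ ‖Qe‖² + ν s² ‖Be‖² ≤ ν⁻¹ ‖Qe‖² + νμ² ‖e‖²`,
and adding the two inequalities gives the claim.
-/

open Matrix

variable {n m : Type*} [Fintype n] [Fintype m]

theorem mul_sub_inv_mul_mul_add_transpose_mul {R : Type*} [CommRing R] [DecidableEq n]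
    {Q : Matrix n n R} (hQ : IsUnit Q.det) (hQt : Qᵀ = Q)
    (A : Matrix n n R) (Y : Matrix n m R) (D : Matrix m n R) :
    Q * (A - Q⁻¹ * Y * D) + (A - Q⁻¹ * Y * D)ᵀ * Q = Q * A + Aᵀ * Q - Y * D - Dᵀ * Yᵀ := by
  have hQY : Q * (Q⁻¹ * Y * D) = Y * D := by
    rw [← Matrix.mul_assoc, ← Matrix.mul_assoc, mul_nonsing_inv _ hQ, Matrix.one_mul]
  have hYQ : (Q⁻¹ * Y * D)ᵀ * Q = Dᵀ * Yᵀ :=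
    calc (Q⁻¹ * Y * D)ᵀ * Q = (Q * (Q⁻¹ * Y * D))ᵀ := by rw [transpose_mul Q, hQt]
      _ = Dᵀ * Yᵀ := by rw [hQY, transpose_mul]
  rw [Matrix.mul_sub, transpose_sub, Matrix.sub_mul, hQY, hYQ]
  abel

theorem posSemidef_neg_add_inv_smul_of_posSemidef_neg_fromBlocks [DecidableEq m] {ν : ℝ}
    (hν : 0 < ν) (P : Matrix n n ℝ) (C : Matrix n m ℝ)
    (h : (-fromBlocks P C Cᵀ (-(ν • (1 : Matrix m m ℝ)))).PosSemidef) :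
    (-(P + ν⁻¹ • (C * Cᵀ))).PosSemidef := by
  have hinv : ν⁻¹ • 1 * ν • (1 : Matrix m m ℝ) = 1 := by
    rw [smul_mul_smul_comm, inv_mul_cancel₀ hν.ne', one_mul, one_smul]
  let : Invertible (ν • (1 : Matrix m m ℝ)) := invertibleOfLeftInverse _ _ hinv
  rw [fromBlocks_neg, neg_neg, ← conjTranspose_eq_transpose_of_trivial, ← conjTranspose_neg,
    PosDef.fromBlocks₂₂ _ _ (PosDef.one.smul hν), inv_eq_left_inv hinv] at h
  simpa [conjTranspose_eq_transpose_of_trivial, neg_add_eq_sub] using h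

theorem dotProduct_mulVec_add_inv_mul_le_zero {ν : ℝ} (P : Matrix n n ℝ) (C : Matrix n m ℝ)
    (h : (-(P + ν⁻¹ • (C * Cᵀ))).PosSemidef) (x : n → ℝ) :
    x ⬝ᵥ P *ᵥ x + ν⁻¹ * (Cᵀ *ᵥ x ⬝ᵥ Cᵀ *ᵥ x) ≤ 0 := by
  have := h.dotProduct_mulVec_nonneg x
  rw [star_trivial, neg_mulVec, dotProduct_neg, add_mulVec, smul_mulVec, ← mulVec_mulVec,
    dotProduct_add, dotProduct_smul, dotProduct_mulVec x C, ← mulVec_transpose,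
    smul_eq_mul] at this
  linarith

theorem two_mul_dotProduct_le {ν : ℝ} (hν : 0 < ν) (u v : n → ℝ) :
    2 * (u ⬝ᵥ v) ≤ ν⁻¹ * (u ⬝ᵥ u) + ν * (v ⬝ᵥ v) := by
  have h := dotProduct_self_star_nonneg (u - ν • v)
  simp only [star_trivial, dotProduct_sub, sub_dotProduct, dotProduct_smul, smul_dotProduct,
    smul_eq_mul, dotProduct_comm v u] at h
  rw [← mul_le_mul_iff_right₀ hν, mul_add, ← mul_assoc ν ν⁻¹, mul_inv_cancel₀ hν.ne', one_mul]
  linarith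

theorem stmt_7_general {n p : ℕ} (Q A B : Matrix (Fin n) (Fin n) ℝ)
    (D : Matrix (Fin p) (Fin n) ℝ) (Y : Matrix (Fin n) (Fin p) ℝ)
    (ν ε μ : ℝ) (hν : 0 < ν)
    (hQ : Q.PosDef)
    (hLMI : (-(Matrix.fromBlocks
        (Q * A + Aᵀ * Q - Y * D - Dᵀ * Yᵀ + (ν * μ ^ 2 + 2 * ε) • (1 : Matrix (Fin n) (Fin n) ℝ))
        Q Q (-(ν • (1 : Matrix (Fin n) (Fin n) ℝ))))).PosSemidef)
    (s : ℝ)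
    -- `|s| ⬝ ‖B‖ ≤ μ`, expressed via the Euclidean operator norm characterization
    (hs : ∀ x : Fin n → ℝ, s ^ 2 * ((B.mulVec x) ⬝ᵥ (B.mulVec x)) ≤ μ ^ 2 * (x ⬝ᵥ x))
    (e : Fin n → ℝ) :
    e ⬝ᵥ ((Q * (A - (Q⁻¹ * Y) * D) + (A - (Q⁻¹ * Y) * D)ᵀ * Q).mulVec e) +
        2 * s * (e ⬝ᵥ ((Q * B).mulVec e)) ≤ -2 * ε * (e ⬝ᵥ e) := by
  have hQt : Qᵀ = Q := hQ.isHermitian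
  rw [mul_sub_inv_mul_mul_add_transpose_mul hQ.det_pos.ne'.isUnit hQt]
  have hLyap := dotProduct_mulVec_add_inv_mul_le_zero _ _
    (posSemidef_neg_add_inv_smul_of_posSemidef_neg_fromBlocks hν _ Q (by rwa [hQt])) e
  have hcross : e ⬝ᵥ (Q * B) *ᵥ e = Q *ᵥ e ⬝ᵥ B *ᵥ e := by
    rw [← mulVec_mulVec, dotProduct_mulVec, ← mulVec_transpose, hQt]
  have hYoung := two_mul_dotProduct_le hν (Q *ᵥ e) (s • B *ᵥ e)
  have hgain := mul_le_mul_of_nonneg_left (hs e) hν.le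
  simp only [hQt, add_mulVec, smul_mulVec, one_mulVec, dotProduct_add, dotProduct_smul,
    smul_dotProduct, smul_eq_mul] at hLyap hYoung
  rw [hcross]
  linarith

theorem stmt_7 {n p : ℕ} (Q A B : Matrix (Fin n) (Fin n) ℝ)
    (D : Matrix (Fin p) (Fin n) ℝ) (Y : Matrix (Fin n) (Fin p) ℝ)
    (ν ε μ : ℝ) (hν : 0 < ν) (hε : 0 < ε) (hμ : 0 ≤ μ)
    (hQ : Q.PosDef)
    (hLMI : (-(Matrix.fromBlocks
        (Q * A + Aᵀ * Q - Y * D - Dᵀ * Yᵀ + (ν * μ ^ 2 + 2 * ε) • (1 : Matrix (Fin n) (Fin n) ℝ))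
        Q Q (-(ν • (1 : Matrix (Fin n) (Fin n) ℝ))))).PosSemidef)
    (s : ℝ)
    -- `|s| ⬝ ‖B‖ ≤ μ`, expressed via the Euclidean operator norm characterization
    (hs : ∀ x : Fin n → ℝ, s ^ 2 * ((B.mulVec x) ⬝ᵥ (B.mulVec x)) ≤ μ ^ 2 * (x ⬝ᵥ x))
    (e : Fin n → ℝ) :
    e ⬝ᵥ ((Q * (A - (Q⁻¹ * Y) * D) + (A - (Q⁻¹ * Y) * D)ᵀ * Q).mulVec e) +
        2 * s * (e ⬝ᵥ ((Q * B).mulVec e)) ≤ -2 * ε * (e ⬝ᵥ e) :=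
  stmt_7_general Q A B D Y ν ε μ hν hQ hLMI s hs e
end

section
/- Let P, F ∈ ℝⁿˣⁿ with P symmetric positive definite, and let ν > 0, ε > 0, μ ≥ 0. Suppose the block matrix [[PF + FᵀP + (νμ² + 2ε)I, P], [P, −νI]] is negative semidefinite. Then for every matrix Δ ∈ ℝⁿˣⁿ with ‖Δ‖ ≤ μ (operator norm) and every s ∈ ℝⁿ: sᵀ(P(F + Δ) + (F + Δ)ᵀP)s ≤ −2ε‖s‖². -/
/-!
Instead of Young's inequality followed by a Schur complement, evaluate the quadratic form of the
negative semidefinite block matrix directly at the vector `(s, Δ s)`: this gives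
`sᵀ(PF + FᵀP)s + (νμ² + 2ε)‖s‖² + sᵀPΔs + (Δs)ᵀPs ≤ ν‖Δs‖² ≤ νμ²‖s‖²`, which is the claim.
-/

open Matrix

namespace Matrix

variable {m n R : Type*} [Fintype m] [Fintype n]

theorem sumElim_dotProduct_fromBlocks_mulVec_sumElim [CommSemiring R]
    (A : Matrix m m R) (B : Matrix m n R) (C : Matrix n m R) (D : Matrix n n R)
    (x : m → R) (y : n → R) :
    Sum.elim x y ⬝ᵥ (fromBlocks A B C D *ᵥ Sum.elim x y) =
      x ⬝ᵥ (A *ᵥ x) + x ⬝ᵥ (B *ᵥ y) + y ⬝ᵥ (C *ᵥ x) + y ⬝ᵥ (D *ᵥ y) := by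
  rw [fromBlocks_mulVec, sumElim_dotProduct_sumElim]
  simp only [Sum.elim_comp_inl, Sum.elim_comp_inr, dotProduct_add]
  ring

theorem dotProduct_mul_add_transpose_mul_mulVec [CommSemiring R]
    (A B : Matrix n n R) (x : n → R) :
    x ⬝ᵥ ((A * B + Bᵀ * A) *ᵥ x) = x ⬝ᵥ (A *ᵥ (B *ᵥ x)) + B *ᵥ x ⬝ᵥ (A *ᵥ x) := by
  rw [add_mulVec, dotProduct_add, ← mulVec_mulVec, ← mulVec_mulVec, dotProduct_mulVec x Bᵀ,
    vecMul_transpose]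

theorem PosSemidef.quadForm_le_of_neg_fromBlocks [CommRing R] [PartialOrder R]
    [IsOrderedAddMonoid R] [StarRing R] [TrivialStar R] [DecidableEq n]
    {M : Matrix m m R} {P : Matrix m n R} {Q : Matrix n m R} {ν : R}
    (h : (-fromBlocks M P Q (-(ν • 1))).PosSemidef) (x : m → R) (y : n → R) :
    x ⬝ᵥ (M *ᵥ x) + x ⬝ᵥ (P *ᵥ y) + y ⬝ᵥ (Q *ᵥ x) ≤ ν * (y ⬝ᵥ y) := by
  have hxy := h.dotProduct_mulVec_nonneg (Sum.elim x y)
  rwa [star_trivial, neg_mulVec, dotProduct_neg, sumElim_dotProduct_fromBlocks_mulVec_sumElim,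
    neg_mulVec, smul_mulVec, one_mulVec, dotProduct_neg, dotProduct_smul, smul_eq_mul,
    ← sub_eq_add_neg, neg_nonneg, sub_nonpos] at hxy

end Matrix

theorem stmt_8_general {n : ℕ} (P F : Matrix (Fin n) (Fin n) ℝ)
    (ν ε μ : ℝ) (hν : 0 < ν)
    (hLMI : (-(Matrix.fromBlocks
        (P * F + Fᵀ * P + (ν * μ ^ 2 + 2 * ε) • (1 : Matrix (Fin n) (Fin n) ℝ))
        P P (-(ν • (1 : Matrix (Fin n) (Fin n) ℝ))))).PosSemidef)
    (Δ : Matrix (Fin n) (Fin n) ℝ)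
    -- `‖Δ‖ ≤ μ` in the Euclidean operator norm
    (hΔ : ∀ x : Fin n → ℝ, (Δ.mulVec x) ⬝ᵥ (Δ.mulVec x) ≤ μ ^ 2 * (x ⬝ᵥ x))
    (s : Fin n → ℝ) :
    s ⬝ᵥ ((P * (F + Δ) + (F + Δ)ᵀ * P).mulVec s) ≤ -2 * ε * (s ⬝ᵥ s) := by
  have hLMI_at := hLMI.quadForm_le_of_neg_fromBlocks s (Δ *ᵥ s)
  have hΔ_scaled := mul_le_mul_of_nonneg_left (hΔ s) hν.le
  rw [add_mulVec, smul_mulVec, one_mulVec, dotProduct_add, dotProduct_smul, smul_eq_mul,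
    dotProduct_mul_add_transpose_mul_mulVec] at hLMI_at
  rw [dotProduct_mul_add_transpose_mul_mulVec, add_mulVec, mulVec_add, dotProduct_add,
    add_dotProduct]
  linarith

theorem stmt_8 {n : ℕ} (P F : Matrix (Fin n) (Fin n) ℝ) (hP : P.PosDef)
    (ν ε μ : ℝ) (hν : 0 < ν) (hε : 0 < ε) (hμ : 0 ≤ μ)
    (hLMI : (-(Matrix.fromBlocks
        (P * F + Fᵀ * P + (ν * μ ^ 2 + 2 * ε) • (1 : Matrix (Fin n) (Fin n) ℝ))
        P P (-(ν • (1 : Matrix (Fin n) (Fin n) ℝ))))).PosSemidef)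
    (Δ : Matrix (Fin n) (Fin n) ℝ)
    -- `‖Δ‖ ≤ μ` in the Euclidean operator norm
    (hΔ : ∀ x : Fin n → ℝ, (Δ.mulVec x) ⬝ᵥ (Δ.mulVec x) ≤ μ ^ 2 * (x ⬝ᵥ x))
    (s : Fin n → ℝ) :
    s ⬝ᵥ ((P * (F + Δ) + (F + Δ)ᵀ * P).mulVec s) ≤ -2 * ε * (s ⬝ᵥ s) :=
  stmt_8_general P F ν ε μ hν hLMI Δ hΔ s
end

section
/- Let u̲, ū, u_ss, k ∈ ℝ with u̲ ≤ u_ss ≤ ū and k > 0, let h ≠ 0, and define v(z) = sat(u_ss − sign(h)·k·z) − u_ss for z ∈ ℝ, where sat clamps to [u̲, ū]. Let c(v) be any function with c(v)·sign(h) > 0 for all v in the range of v(·). Then c(v(z))·v(z)·z ≤ 0 for all z ∈ ℝ, with equality only if v(z) = 0. -/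
noncomputable def sat (ul ub s : ℝ) : ℝ :=
  if s ≥ ub then ub else if s ≤ ul then ul else s

theorem stmt_12 (ul ub uss k h : ℝ) (huss : uss ∈ Set.Icc ul ub) (hk : 0 < k)
    (hh : h ≠ 0) (c : ℝ → ℝ)
    (hc : ∀ z : ℝ, 0 < c (sat ul ub (uss - Real.sign h * k * z) - uss) * Real.sign h) :
    ∀ z : ℝ,
      c (sat ul ub (uss - Real.sign h * k * z) - uss) *
          (sat ul ub (uss - Real.sign h * k * z) - uss) * z ≤ 0 ∧
        (c (sat ul ub (uss - Real.sign h * k * z) - uss) *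
            (sat ul ub (uss - Real.sign h * k * z) - uss) * z = 0 →
          sat ul ub (uss - Real.sign h * k * z) - uss = 0) := by
  intro z
  set s := Real.sign h with hsdef
  have hs1 : s = 1 ∨ s = -1 := by
    rcases hh.lt_or_gt with h1 | h1
    · right; exact Real.sign_of_neg h1
    · left; exact Real.sign_of_pos h1
  have hss : s * s = 1 := by rcases hs1 with h | h <;> simp [h]
  set v := sat ul ub (uss - s * k * z) - uss with hv
  have hcs : 0 < c v * s := hc z
  have key : s * (v * z) ≤ 0 := by
    rw [hv]
    unfold sat
    split_ifs with h1 h2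
    · -- clipped above: v = ub - uss ≥ 0, s*k*z ≤ 0
      have h3 : k * (s * z) ≤ 0 := by nlinarith [huss.2]
      have h4 : s * z ≤ 0 := nonpos_of_mul_nonpos_right h3 hk
      nlinarith [huss.2]
    · -- clipped below
      have h3 : 0 ≤ k * (s * z) := by nlinarith [huss.1]
      have h4 : 0 ≤ s * z := nonneg_of_mul_nonneg_right h3 hk
      nlinarith [huss.1]
    · have he : s * ((uss - s * k * z - uss) * z) = -((s * s) * (k * z ^ 2)) := by ring
      rw [he, hss]
      nlinarith [sq_nonneg z]
  have e : c v * v * z = (c v * s) * (s * (v * z)) := by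
    have : (c v * s) * (s * (v * z)) = c v * (s * s) * (v * z) := by ring
    rw [this, hss]; ring
  constructor
  · rw [e]; exact mul_nonpos_of_nonneg_of_nonpos hcs.le key
  · intro heq
    rw [e] at heq
    have hvz : s * (v * z) = 0 := by
      rcases mul_eq_zero.mp heq with h | h
      · exact absurd h hcs.ne'
      · exact h
    have hs0 : s ≠ 0 := by rcases hs1 with h | h <;> simp [h]
    have hvz2 : v * z = 0 := by
      rcases mul_eq_zero.mp hvz with h | h
      · exact absurd h hs0
      · exact h
    rcases mul_eq_zero.mp hvz2 with h | h
    · exact h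
    · subst h
      rw [hv]
      have : uss - s * k * 0 = uss := by ring
      rw [this]
      unfold sat
      split_ifs with h1 h2
      · linarith [huss.2]
      · linarith [huss.1]
      · ring
end

section
/- Let n ≥ 1, α > 0, β > 0, q̄ > 0, u ≥ 0, and let S ∈ ℝⁿˣⁿ satisfy S + Sᵀ ≺ 0 (negative definite). Then the symmetric 2n×2n block matrix Υ = [[−2αI + u(S + Sᵀ), 2αI], [2αI, −2αI + q̄(α/β)(S + Sᵀ)]] is negative definite. -/
/-! With `P = -(S + Sᵀ) ≻ 0`, the quadratic form of `-Υ` at `(x, y)` is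
`2α ‖x - y‖² + u xᵀPx + (q̄α/β) yᵀPy`. The last term is positive when `y ≠ 0`, and the first
one when `y = 0` and `x ≠ 0`. -/

open Matrix

theorem Matrix.dotProduct_fromBlocks_mulVec_sumElim {m n R : Type*} [Fintype m] [Fintype n]
    [CommSemiring R] (A : Matrix m m R) (B : Matrix m n R) (C : Matrix n m R)
    (D : Matrix n n R) (x : m → R) (y : n → R) :
    Sum.elim x y ⬝ᵥ fromBlocks A B C D *ᵥ Sum.elim x y =
      x ⬝ᵥ A *ᵥ x + x ⬝ᵥ B *ᵥ y + y ⬝ᵥ C *ᵥ x + y ⬝ᵥ D *ᵥ y := by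
  simp only [fromBlocks_mulVec, sumElim_dotProduct_sumElim, dotProduct_add, Sum.elim_comp_inl,
    Sum.elim_comp_inr]
  ring

theorem Matrix.PosDef.fromBlocks_smul_one_coupling {ι : Type*} [Fintype ι] [DecidableEq ι]
    {P : Matrix ι ι ℝ} (hP : P.PosDef) {a u c : ℝ} (ha : 0 < a) (hu : 0 ≤ u) (hc : 0 < c) :
    (fromBlocks (a • 1 + u • P) (-(a • 1)) (-(a • 1)) (a • 1 + c • P)).PosDef := by
  have hPt : Pᵀ = P := hP.isHermitian
  refine posDef_iff_dotProduct_mulVec.mpr ⟨?_, fun w hw => ?_⟩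
  · refine IsHermitian.fromBlocks ?_ ?_ ?_ <;>
      simp [IsHermitian, conjTranspose_eq_transpose_of_trivial, hPt]
  obtain ⟨x, y, rfl⟩ : ∃ x y, w = Sum.elim x y :=
    ⟨w ∘ Sum.inl, w ∘ Sum.inr, by ext (i | i) <;> rfl⟩
  have hform : Sum.elim x y ⬝ᵥ
      fromBlocks (a • 1 + u • P) (-(a • 1)) (-(a • 1)) (a • 1 + c • P) *ᵥ Sum.elim x y =
        a * ((x - y) ⬝ᵥ (x - y)) + u * (x ⬝ᵥ P *ᵥ x) + c * (y ⬝ᵥ P *ᵥ y) := by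
    simp only [dotProduct_fromBlocks_mulVec_sumElim, add_mulVec, smul_mulVec, neg_mulVec,
      one_mulVec, dotProduct_add, dotProduct_smul, dotProduct_neg, smul_eq_mul, dotProduct_sub,
      sub_dotProduct, dotProduct_comm y x]
    ring
  have hPx : 0 ≤ x ⬝ᵥ P *ᵥ x := by simpa using hP.posSemidef.dotProduct_mulVec_nonneg x
  rw [star_trivial, hform]
  rcases eq_or_ne y 0 with rfl | hy
  · have hx : x ≠ 0 := by rintro rfl; exact hw (by ext (i | i) <;> rfl)
    have hxx : 0 < x ⬝ᵥ x := by simpa using dotProduct_self_star_pos_iff.mpr hx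
    simp only [sub_zero, mulVec_zero, dotProduct_zero, mul_zero, add_zero]
    positivity
  · have hPy : 0 < y ⬝ᵥ P *ᵥ y := by simpa using hP.dotProduct_mulVec_pos hy
    have hxy : 0 ≤ (x - y) ⬝ᵥ (x - y) := by simpa using dotProduct_self_star_nonneg (x - y)
    positivity

theorem stmt_13_general {n : ℕ} (α β qb u : ℝ)
    (hα : 0 < α) (hβ : 0 < β) (hq : 0 < qb) (hu : 0 ≤ u)
    (S : Matrix (Fin n) (Fin n) ℝ) (hS : (-(S + Sᵀ)).PosDef) :
    (-(Matrix.fromBlocks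
        (-((2 * α) • (1 : Matrix (Fin n) (Fin n) ℝ)) + u • (S + Sᵀ))
        ((2 * α) • (1 : Matrix (Fin n) (Fin n) ℝ))
        ((2 * α) • (1 : Matrix (Fin n) (Fin n) ℝ))
        (-((2 * α) • (1 : Matrix (Fin n) (Fin n) ℝ)) + (qb * α / β) • (S + Sᵀ)))).PosDef := by
  convert hS.fromBlocks_smul_one_coupling (by positivity : 0 < 2 * α) hu
    (by positivity : 0 < qb * α / β) using 1
  rw [fromBlocks_neg, smul_neg, smul_neg, neg_add, neg_neg, neg_add, neg_neg]

theorem stmt_13 {n : ℕ} (hn : 1 ≤ n) (α β qb u : ℝ)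
    (hα : 0 < α) (hβ : 0 < β) (hq : 0 < qb) (hu : 0 ≤ u)
    (S : Matrix (Fin n) (Fin n) ℝ) (hS : (-(S + Sᵀ)).PosDef) :
    (-(Matrix.fromBlocks
        (-((2 * α) • (1 : Matrix (Fin n) (Fin n) ℝ)) + u • (S + Sᵀ))
        ((2 * α) • (1 : Matrix (Fin n) (Fin n) ℝ))
        ((2 * α) • (1 : Matrix (Fin n) (Fin n) ℝ))
        (-((2 * α) • (1 : Matrix (Fin n) (Fin n) ℝ)) + (qb * α / β) • (S + Sᵀ)))).PosDef :=
  stmt_13_general α β qb u hα hβ hq hu S hS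
end

section
/- Let f : ℝⁿ → ℝⁿ be locally Lipschitz, and suppose there exist a locally Lipschitz V : ℝⁿ → ℝ, class-K∞ functions α̲, ᾱ, a class-K function α, and a continuous h : ℝⁿ → ℝᵖ such that α̲(‖x‖) ≤ V(x) ≤ ᾱ(‖x‖) for all x, and the upper right Dini derivative of V along solutions satisfies D⁺V ≤ −α(‖h(x)‖) for all x ≠ 0. If every solution with h(x(t)) = 0 for all t ≥ 0 converges to the origin (zero-state detectability), then the origin of ẋ = f(x) is globally asymptotically stable. -/
open Filter

/-- Class-K functions: continuous, strictly increasing, vanishing at 0. -/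
def IsClassK (α : ℝ → ℝ) : Prop :=
  Continuous α ∧ StrictMonoOn α (Set.Ici 0) ∧ α 0 = 0

/-- Class-K∞ functions. -/
def IsClassKInf (α : ℝ → ℝ) : Prop :=
  IsClassK α ∧ Tendsto α atTop atTop

/-- Upper right-hand Dini derivative of a real function. -/
noncomputable def diniDeriv (φ : ℝ → ℝ) (t : ℝ) : ℝ :=
  limsup (fun h : ℝ => (φ (t + h) - φ t) / h) (nhdsWithin 0 (Set.Ioi 0))

/-- A (forward-complete) solution of `ẋ = f(x)`. -/
def IsSolution {n : ℕ} (f : (Fin n → ℝ) → (Fin n → ℝ)) (φ : ℝ → Fin n → ℝ) : Prop :=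
  ∀ t : ℝ, 0 ≤ t → HasDerivAt φ (f (φ t)) t

open Set Topology NNReal Asymptotics

/-!
Along every solution `V` is nonincreasing: its upper Dini derivative is `≤ 0` wherever `V > 0`,
which gives Lyapunov stability and boundedness of all trajectories. A bounded trajectory `φ` is
uniformly Lipschitz, so by Arzelà–Ascoli its time-shifts accumulate (compact-open topology) at a
function `ψ`, which solves the integral equation, hence the ODE. Since `V (φ t)` decreases to
some `c`, `V ∘ ψ ≡ c`; its Dini derivative then vanishes, forcing `h ∘ ψ = 0`, and zero-state
detectability gives `ψ → 0`, so `c = V 0 = 0` and finally `φ → 0`.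
-/

theorem diniDeriv_const (c t : ℝ) : diniDeriv (fun _ => c) t = 0 := by
  simp [diniDeriv]

-- `diniDeriv` is a real `limsup`, so it only carries information when the quotients are
-- bounded above; hence the `IsBoundedUnder` hypotheses below.
theorem frequently_slope_lt_of_diniDeriv_le {g : ℝ → ℝ} {x w : ℝ}
    (hbdd : IsBoundedUnder (· ≤ ·) (𝓝[>] 0) fun h => (g (x + h) - g x) / h)
    (hd : diniDeriv g x ≤ w) {r : ℝ} (hr : w < r) : ∃ᶠ z in 𝓝[>] x, slope g x z < r := by
  have hmap : map (x + ·) (𝓝[>] (0 : ℝ)) = 𝓝[>] x := by simp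
  rw [← hmap, frequently_map]
  by_contra! hcon
  refine (hd.trans_lt hr).not_ge
    (le_limsup_of_frequently_le (hcon.mono fun h hh => ?_).frequently hbdd)
  rwa [slope_def_field, add_sub_cancel_left] at hh

theorem le_of_diniDeriv_nonpos {g : ℝ → ℝ} {a b : ℝ} (hab : a ≤ b)
    (hg : ContinuousOn g (Icc a b))
    (hbdd : ∀ x ∈ Ico a b, IsBoundedUnder (· ≤ ·) (𝓝[>] 0) fun h => (g (x + h) - g x) / h)
    (hd : ∀ x ∈ Ico a b, diniDeriv g x ≤ 0) : g b ≤ g a :=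
  image_le_of_liminf_slope_right_le_deriv_boundary (B := fun _ => g a) hg le_rfl
    continuousOn_const (fun _ _ => hasDerivWithinAt_const _ _ _)
    (fun x hx _ hr => frequently_slope_lt_of_diniDeriv_le (hbdd x hx) (hd x hx) hr)
    (right_mem_Icc.2 hab)

theorem antitoneOn_of_diniDeriv_nonpos_of_pos {g : ℝ → ℝ} {a : ℝ}
    (hg : ContinuousOn g (Ici a)) (hnonneg : ∀ x ∈ Ici a, 0 ≤ g x)
    (hbdd : ∀ x ∈ Ici a, IsBoundedUnder (· ≤ ·) (𝓝[>] 0) fun h => (g (x + h) - g x) / h)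
    (hd : ∀ x ∈ Ici a, 0 < g x → diniDeriv g x ≤ 0) : AntitoneOn g (Ici a) := by
  intro s hs t ht hst
  by_contra! hlt
  obtain ⟨c, hsc, hct⟩ := exists_between hlt
  have hc : 0 < c := (hnonneg s hs).trans_lt hsc
  -- after the last time `u ∈ [s, t]` with `g u ≤ c`, `g` stays above `c > 0`, hence cannot increase
  have hS : IsCompact (Icc s t ∩ g ⁻¹' Iic c) :=
    isCompact_Icc.of_isClosed_subset
      ((hg.mono fun r hr => hs.trans hr.1).preimage_isClosed_of_isClosed isClosed_Icc isClosed_Iic)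
      inter_subset_left
  obtain ⟨u, ⟨⟨hsu, hut⟩, hgu⟩, hlast⟩ :=
    hS.exists_isGreatest ⟨s, ⟨le_rfl, hst⟩, hsc.le⟩
  have hu : a ≤ u := le_trans hs hsu
  have hut : u < t := hut.lt_of_ne <| by rintro rfl; exact hct.not_ge hgu
  have hgt (r : ℝ) (hr : r ∈ Ioc u t) : c < g r :=
    not_le.1 fun h => hr.1.not_ge (hlast ⟨⟨hsu.trans hr.1.le, hr.2⟩, h⟩)
  have hle (r : ℝ) (hr : r ∈ Ioo u t) : g t ≤ g r :=
    le_of_diniDeriv_nonpos hr.2.le (hg.mono fun x hx => hu.trans (hr.1.le.trans hx.1))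
      (fun x hx => hbdd x (hu.trans (hr.1.le.trans hx.1)))
      (fun x hx => hd x (hu.trans (hr.1.le.trans hx.1))
        (hc.trans (hgt x ⟨hr.1.trans_le hx.1, hx.2.le⟩)))
  have : g t ≤ g u := ge_of_tendsto
    ((hg u hu).mono_left (nhdsWithin_mono u (Ioi_subset_Ici_self.trans (Ici_subset_Ici.2 hu))))
    (mem_of_superset (Ioo_mem_nhdsGT hut) hle)
  exact hct.not_ge (this.trans hgu)

theorem LocallyLipschitz.isBoundedUnder_le_comp_of_differentiableAt {E : Type*}
    [NormedAddCommGroup E] [NormedSpace ℝ E] {V : E → ℝ} (hV : LocallyLipschitz V) {φ : ℝ → E}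
    {x : ℝ} (hφ : DifferentiableAt ℝ φ x) :
    IsBoundedUnder (· ≤ ·) (𝓝[>] 0) fun h => (V (φ (x + h)) - V (φ x)) / h := by
  obtain ⟨K, U, hU, hK⟩ := hV (φ x)
  have hVφ : (fun y => V (φ y) - V (φ x)) =O[𝓝 x] fun y => φ y - φ x :=
    IsBigO.of_bound K <| by
      filter_upwards [hφ.continuousAt hU] with y hy
      exact hK.norm_sub_le hy (mem_of_mem_nhds hU)
  obtain ⟨C, hC⟩ := ((hVφ.trans hφ.hasDerivAt.isBigO_sub).comp_tendsto
    ((continuous_const_add x).tendsto' 0 x (add_zero x))).bound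
  refine ⟨C, eventually_map.2 ?_⟩
  filter_upwards [nhdsWithin_le_nhds hC, self_mem_nhdsWithin] with h hh (hpos : 0 < h)
  rw [div_le_iff₀ hpos]
  simp only [Function.comp_apply, add_sub_cancel_left, Real.norm_eq_abs, abs_of_pos hpos] at hh
  exact (le_abs_self _).trans hh

theorem AntitoneOn.exists_tendsto_atTop {g : ℝ → ℝ} {a m : ℝ} (hg : AntitoneOn g (Ici a))
    (hm : ∀ t ≥ a, m ≤ g t) : ∃ c, Tendsto g atTop (𝓝 c) := by
  have hanti : Antitone fun t => g (max t a) := fun s t hst =>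
    hg (le_max_right s a) (le_max_right t a) (max_le_max_right a hst)
  refine ⟨_, (tendsto_atTop_ciInf hanti ⟨m, ?_⟩).congr' ?_⟩
  · rintro _ ⟨t, rfl⟩
    exact hm _ (le_max_right t a)
  · filter_upwards [eventually_ge_atTop a] with t ht
    rw [max_eq_left ht]

theorem LocallyLipschitz.antitoneOn_comp_of_diniDeriv_nonpos {E : Type*} [NormedAddCommGroup E]
    [NormedSpace ℝ E] {V : E → ℝ} (hV : LocallyLipschitz V) (hV0 : V 0 = 0)
    (hVnn : ∀ x, 0 ≤ V x) {φ : ℝ → E} (hφ : ∀ t ≥ 0, DifferentiableAt ℝ φ t)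
    (hd : ∀ t ≥ 0, φ t ≠ 0 → diniDeriv (fun τ => V (φ τ)) t ≤ 0) :
    AntitoneOn (fun t => V (φ t)) (Ici 0) :=
  antitoneOn_of_diniDeriv_nonpos_of_pos
    (fun t ht => (hV.continuous.continuousAt.comp (hφ t ht).continuousAt).continuousWithinAt)
    (fun _ _ => hVnn _) (fun t ht => hV.isBoundedUnder_le_comp_of_differentiableAt (hφ t ht))
    fun t ht hpos => hd t ht fun h0 => by simp [h0, hV0] at hpos

theorem isCompact_setOf_lipschitzWith_forall_mem {X E : Type*} [PseudoMetricSpace X]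
    [PseudoMetricSpace E] (K : ℝ≥0) {s : Set E} (hs : IsCompact s) :
    IsCompact {g : C(X, E) | LipschitzWith K g ∧ ∀ x, g x ∈ s} := by
  refine ArzelaAscoli.isCompact_of_equicontinuous _ ?_ ?_
  · have : ContinuousMap.toFun '' {g : C(X, E) | LipschitzWith K g ∧ ∀ x, g x ∈ s} =
        {g : X → E | LipschitzWith K g} ∩ univ.pi fun _ => s := by
      ext g
      refine ⟨?_, fun hg => ⟨⟨g, hg.1.continuous⟩, ⟨hg.1, fun x => hg.2 x trivial⟩, rfl⟩⟩
      rintro ⟨g, hg, rfl⟩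
      exact ⟨hg.1, fun x _ => hg.2 x⟩
    rw [this]
    exact (isCompact_univ_pi fun _ => hs).inter_left (isClosed_setOfPred_lipschitzWith K)
  · exact (LipschitzWith.uniformEquicontinuous _ K fun g => g.2.1).equicontinuous

section OmegaLimit

variable {E : Type*} [NormedAddCommGroup E] [NormedSpace ℝ E] [ProperSpace E]
  {f : E → E} {φ : ℝ → E} {R : ℝ}

theorem exists_lipschitzOnWith_of_hasDerivAt_of_norm_le (hf : Continuous f)
    (hφ : ∀ t ≥ 0, HasDerivAt φ (f (φ t)) t) (hR : ∀ t ≥ 0, ‖φ t‖ ≤ R) :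
    ∃ M : ℝ≥0, LipschitzOnWith M φ (Ici 0) := by
  obtain ⟨C, hC⟩ :=
    (isCompact_closedBall (0 : E) R).exists_bound_of_continuousOn hf.continuousOn
  refine ⟨C.toNNReal, (convex_Ici 0).lipschitzOnWith_of_nnnorm_hasDerivWithin_le
    (fun t ht => (hφ t ht).hasDerivWithinAt) fun t ht => ?_⟩
  rw [← NNReal.coe_le_coe, coe_nnnorm]
  exact (hC _ (mem_closedBall_zero_iff.2 (hR t ht))).trans (Real.le_coe_toNNReal C)

theorem exists_solution_forall_mapClusterPt_shift (hf : Continuous f)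
    (hφ : ∀ t ≥ 0, HasDerivAt φ (f (φ t)) t) (hR : ∀ t ≥ 0, ‖φ t‖ ≤ R) :
    ∃ ψ : ℝ → E, (∀ t, HasDerivAt ψ (f (ψ t)) t) ∧
      ∀ t, MapClusterPt (ψ t) atTop fun s => φ (s + t) := by
  obtain ⟨M, hM⟩ := exists_lipschitzOnWith_of_hasDerivAt_of_norm_le hf hφ hR
  -- the shifts of `φ`, frozen at `φ 0` before time `0`, are all `M`-Lipschitz on `ℝ`
  have hlip (s : ℝ) : LipschitzWith M fun t => φ (max (s + t) 0) := by
    have := hM.comp ((IsometryEquiv.addLeft s).isometry.lipschitz.max_const 0).lipschitzOnWith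
      (s := univ) fun _ _ => mem_Ici.2 (le_max_right _ _)
    rwa [mul_one, lipschitzOnWith_univ] at this
  set shift : ℝ → C(ℝ, E) := fun s => ⟨_, (hlip s).continuous⟩ with hshift
  have hshift_eq {s t : ℝ} (h : -s ≤ t) : shift s t = φ (s + t) := by
    simp only [hshift, ContinuousMap.coe_mk, max_eq_left (by linarith : 0 ≤ s + t)]
  have hshift_deriv {s t : ℝ} (h : -s < t) : HasDerivAt (shift s) (f (shift s t)) t := by
    rw [hshift_eq h.le]
    refine ((hφ (s + t) (by linarith)).comp_const_add s t).congr_of_eventuallyEq ?_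
    filter_upwards [Ioi_mem_nhds h] with τ hτ using hshift_eq hτ.le
  have hshift_integral {s u : ℝ} (h : |u| < s) :
      shift s u = shift s 0 + ∫ t in 0..u, f (shift s t) := by
    have hmem {t : ℝ} (ht : t ∈ uIcc 0 u) : -s < t := by
      linarith [ht.1, le_min (neg_nonpos.2 (abs_nonneg u)) (neg_abs_le u)]
    rw [intervalIntegral.integral_eq_sub_of_hasDerivAt (fun t ht => hshift_deriv (hmem ht))
      ((hf.comp (shift s).continuous).intervalIntegrable 0 u), add_sub_cancel]
  obtain ⟨Ψ, -, hΨ⟩ := (isCompact_setOf_lipschitzWith_forall_mem M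
    (isCompact_closedBall (0 : E) R)).exists_mapClusterPt (f := atTop) (u := shift)
    (tendsto_principal.2 <| .of_forall fun s =>
      ⟨hlip s, fun t => mem_closedBall_zero_iff.2 (hR _ (le_max_right _ _))⟩)
  have hΨ_integral (u : ℝ) : Ψ u = Ψ 0 + ∫ t in 0..u, f (Ψ t) := by
    have hcont : Continuous fun g : C(ℝ, E) => ∫ t in 0..u, f (g t) :=
      intervalIntegral.continuous_parametric_intervalIntegral_of_continuous'
        (f := fun (g : C(ℝ, E)) t => f (g t)) (hf.comp continuous_eval) 0 u
    refine (isClosed_eq (continuous_eval_const u) ((continuous_eval_const 0).add hcont))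
      |>.mem_of_mapClusterPt hΨ ?_
    filter_upwards [eventually_gt_atTop |u|] with s hs using hshift_integral hs
  refine ⟨Ψ, fun t => ?_, fun t => ?_⟩
  · exact ((hf.comp Ψ.continuous).integral_hasStrictDerivAt 0 t).hasDerivAt.const_add (Ψ 0)
      |>.congr_of_eventuallyEq (.of_forall hΨ_integral)
  · refine (EventuallyEq.mapClusterPt_iff ?_).1
      (hΨ.tendsto_comp (continuous_eval_const t).continuousAt)
    filter_upwards [eventually_ge_atTop (-t)] with s hs using hshift_eq (by linarith)

end OmegaLimit

theorem MapClusterPt.eq_of_tendsto {ι X : Type*} [TopologicalSpace X] [T2Space X] {F : Filter ι}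
    {u : ι → X} {x y : X} (hx : MapClusterPt x F u) (hu : Tendsto u F (𝓝 y)) : x = y :=
  eq_of_nhds_neBot (ClusterPt.mono hx hu)

namespace IsClassK

variable {α : ℝ → ℝ}

theorem nonneg (hα : IsClassK α) {r : ℝ} (hr : 0 ≤ r) : 0 ≤ α r :=
  hα.2.2 ▸ hα.2.1.monotoneOn self_mem_Ici hr hr

theorem pos (hα : IsClassK α) {r : ℝ} (hr : 0 < r) : 0 < α r :=
  hα.2.2 ▸ hα.2.1 self_mem_Ici hr.le hr

theorem lt_iff_lt (hα : IsClassK α) {a b : ℝ} (ha : 0 ≤ a) (hb : 0 ≤ b) : α a < α b ↔ a < b :=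
  hα.2.1.lt_iff_lt ha hb

theorem eq_zero_of_nonpos (hα : IsClassK α) {r : ℝ} (hr : 0 ≤ r) (h : α r ≤ 0) : r = 0 :=
  hr.eq_or_lt.elim Eq.symm fun hpos => absurd h (hα.pos hpos).not_ge

end IsClassK

section Sandwich

variable {E : Type*} [SeminormedAddCommGroup E] {V : E → ℝ} {αl αu : ℝ → ℝ}

theorem exists_pos_forall_norm_lt_of_le (hαl : IsClassK αl) (hαu : IsClassK αu)
    (hbound : ∀ x, αl ‖x‖ ≤ V x ∧ V x ≤ αu ‖x‖) {ε : ℝ} (hε : 0 < ε) :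
    ∃ δ > 0, ∀ x y : E, ‖x‖ < δ → V y ≤ V x → ‖y‖ < ε := by
  have hαu0 : ∀ᶠ r in 𝓝 0, αu r < αl ε :=
    hαu.1.continuousAt.eventually_lt continuousAt_const (by rw [hαu.2.2]; exact hαl.pos hε)
  obtain ⟨δ, hδ, hδα⟩ := Metric.eventually_nhds_iff.1 hαu0
  refine ⟨δ, hδ, fun x y hx hyx => (hαl.lt_iff_lt (norm_nonneg y) hε.le).1 ?_⟩
  calc αl ‖y‖ ≤ V y := (hbound y).1
    _ ≤ V x := hyx
    _ ≤ αu ‖x‖ := (hbound x).2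
    _ < αl ε := hδα (by rwa [Real.dist_0_eq_abs, abs_norm])

theorem exists_forall_norm_le_of_le (hαl : IsClassKInf αl) (hbound : ∀ x, αl ‖x‖ ≤ V x)
    (C : ℝ) : ∃ R, ∀ x : E, V x ≤ C → ‖x‖ ≤ R := by
  obtain ⟨R, hRC, hR⟩ := ((hαl.2.eventually_gt_atTop C).and (eventually_ge_atTop 0)).exists
  refine ⟨R, fun x hx => not_lt.1 fun hxR => ?_⟩
  have := (hαl.1.lt_iff_lt hR (norm_nonneg x)).2 hxR
  linarith [hbound x]

theorem tendsto_nhds_zero_of_tendsto_comp (hαl : IsClassK αl) (hbound : ∀ x, αl ‖x‖ ≤ V x)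
    {ι : Type*} {l : Filter ι} {u : ι → E} (hu : Tendsto (fun i => V (u i)) l (𝓝 0)) :
    Tendsto u l (𝓝 0) := by
  refine Metric.tendsto_nhds.2 fun ε hε => ?_
  filter_upwards [hu.eventually (gt_mem_nhds (hαl.pos hε))] with i hi
  rw [dist_zero_right]
  exact (hαl.lt_iff_lt (norm_nonneg _) hε.le).1 ((hbound _).trans_lt hi)

end Sandwich

namespace IsSolution

variable {n : ℕ} {F : Type*} [NormedAddCommGroup F] {f : (Fin n → ℝ) → (Fin n → ℝ)}
  {V : (Fin n → ℝ) → ℝ} {α : ℝ → ℝ} {h : (Fin n → ℝ) → F}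

theorem eq_zero_of_forall_comp_eq (hV : Continuous V) (hV0 : V 0 = 0) (hα : IsClassK α)
    (hdini : ∀ φ : ℝ → Fin n → ℝ, IsSolution f φ →
      ∀ t ≥ (0 : ℝ), φ t ≠ 0 → diniDeriv (fun τ => V (φ τ)) t ≤ -α ‖h (φ t)‖)
    (hzsd : ∀ φ : ℝ → Fin n → ℝ, IsSolution f φ →
      (∀ t ≥ (0 : ℝ), h (φ t) = 0) → Tendsto φ atTop (nhds 0))
    {ψ : ℝ → Fin n → ℝ} (hψ : IsSolution f ψ) {c : ℝ} (hVψ : ∀ t, V (ψ t) = c) : c = 0 := by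
  by_cases hhit : ∃ t ≥ 0, ψ t = 0
  · obtain ⟨t, -, ht⟩ := hhit
    rw [← hVψ t, ht, hV0]
  push Not at hhit
  have hh (t : ℝ) (ht : t ≥ 0) : h (ψ t) = 0 := by
    have := hdini ψ hψ t ht (hhit t ht)
    rw [show (fun τ => V (ψ τ)) = fun _ => c from funext hVψ, diniDeriv_const] at this
    exact norm_eq_zero.1 (hα.eq_zero_of_nonpos (norm_nonneg _) (by linarith))
  exact tendsto_nhds_unique (tendsto_const_nhds.congr fun t => (hVψ t).symm)
    (hV0 ▸ (hV.tendsto 0).comp (hzsd ψ hψ hh))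

theorem tendsto_nhds_zero (hf : Continuous f) (hV : Continuous V) (hV0 : V 0 = 0)
    {αl : ℝ → ℝ} (hαl : IsClassKInf αl) (hα : IsClassK α) (hlow : ∀ x, αl ‖x‖ ≤ V x)
    (hanti : ∀ φ : ℝ → Fin n → ℝ, IsSolution f φ → AntitoneOn (fun t => V (φ t)) (Ici 0))
    (hdini : ∀ φ : ℝ → Fin n → ℝ, IsSolution f φ →
      ∀ t ≥ (0 : ℝ), φ t ≠ 0 → diniDeriv (fun τ => V (φ τ)) t ≤ -α ‖h (φ t)‖)
    (hzsd : ∀ φ : ℝ → Fin n → ℝ, IsSolution f φ →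
      (∀ t ≥ (0 : ℝ), h (φ t) = 0) → Tendsto φ atTop (nhds 0))
    {φ : ℝ → Fin n → ℝ} (hφ : IsSolution f φ) : Tendsto φ atTop (𝓝 0) := by
  obtain ⟨c, hc⟩ := (hanti φ hφ).exists_tendsto_atTop fun t _ =>
    (hαl.1.nonneg (norm_nonneg _)).trans (hlow (φ t))
  obtain ⟨R, hR⟩ := exists_forall_norm_le_of_le hαl hlow (V (φ 0))
  obtain ⟨ψ, hψ, hψφ⟩ := exists_solution_forall_mapClusterPt_shift hf hφ fun t ht =>
    hR _ (hanti φ hφ self_mem_Ici ht ht)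
  have hVψ (t : ℝ) : V (ψ t) = c :=
    (hψφ t).continuousAt_comp hV.continuousAt |>.eq_of_tendsto <|
      hc.comp (tendsto_atTop_add_const_right atTop t tendsto_id)
  have hc0 := eq_zero_of_forall_comp_eq hV hV0 hα hdini hzsd (fun t _ => hψ t) hVψ
  exact tendsto_nhds_zero_of_tendsto_comp hαl.1 hlow (hc0 ▸ hc)

end IsSolution

theorem stmt_16_general {n p : ℕ} (f : (Fin n → ℝ) → (Fin n → ℝ)) (hf : LocallyLipschitz f)
    (V : (Fin n → ℝ) → ℝ) (hV : LocallyLipschitz V)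
    (αl αu α : ℝ → ℝ) (hαl : IsClassKInf αl) (hαu : IsClassKInf αu) (hα : IsClassK α)
    (h : (Fin n → ℝ) → (Fin p → ℝ))
    (hbound : ∀ x : Fin n → ℝ, αl ‖x‖ ≤ V x ∧ V x ≤ αu ‖x‖)
    (hdini : ∀ φ : ℝ → Fin n → ℝ, IsSolution f φ →
      ∀ t ≥ (0 : ℝ), φ t ≠ 0 → diniDeriv (fun τ => V (φ τ)) t ≤ -α ‖h (φ t)‖)
    (hzsd : ∀ φ : ℝ → Fin n → ℝ, IsSolution f φ →
      (∀ t ≥ (0 : ℝ), h (φ t) = 0) → Tendsto φ atTop (nhds 0)) :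
    -- Lyapunov stability of the origin
    (∀ ε > (0 : ℝ), ∃ δ > (0 : ℝ), ∀ φ : ℝ → Fin n → ℝ, IsSolution f φ →
      ‖φ 0‖ < δ → ∀ t ≥ (0 : ℝ), ‖φ t‖ < ε) ∧
    -- global attractivity of the origin
    (∀ φ : ℝ → Fin n → ℝ, IsSolution f φ → Tendsto φ atTop (nhds 0)) := by
  have hV0 : V 0 = 0 := le_antisymm (by simpa [hαu.1.2.2] using (hbound 0).2)
    (by simpa [hαl.1.2.2] using (hbound 0).1)
  have hanti (φ : ℝ → Fin n → ℝ) (hφ : IsSolution f φ) : AntitoneOn (fun t => V (φ t)) (Ici 0) :=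
    hV.antitoneOn_comp_of_diniDeriv_nonpos hV0
      (fun x => (hαl.1.nonneg (norm_nonneg x)).trans (hbound x).1)
      (fun t ht => (hφ t ht).differentiableAt) fun t ht hne =>
        (hdini φ hφ t ht hne).trans (neg_nonpos.2 (hα.nonneg (norm_nonneg _)))
  refine ⟨fun ε hε => ?_, fun φ hφ => ?_⟩
  · obtain ⟨δ, hδ, hδε⟩ := exists_pos_forall_norm_lt_of_le hαl.1 hαu.1 hbound hε
    exact ⟨δ, hδ, fun φ hφ hφ0 t ht => hδε _ _ hφ0 (hanti φ hφ self_mem_Ici ht ht)⟩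
  · exact hφ.tendsto_nhds_zero hf.continuous hV.continuous hV0 hαl hα (fun x => (hbound x).1)
      hanti hdini hzsd

theorem stmt_16 {n p : ℕ} (f : (Fin n → ℝ) → (Fin n → ℝ)) (hf : LocallyLipschitz f)
    (V : (Fin n → ℝ) → ℝ) (hV : LocallyLipschitz V)
    (αl αu α : ℝ → ℝ) (hαl : IsClassKInf αl) (hαu : IsClassKInf αu) (hα : IsClassK α)
    (h : (Fin n → ℝ) → (Fin p → ℝ)) (hh : Continuous h)
    (hbound : ∀ x : Fin n → ℝ, αl ‖x‖ ≤ V x ∧ V x ≤ αu ‖x‖)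
    (hdini : ∀ φ : ℝ → Fin n → ℝ, IsSolution f φ →
      ∀ t ≥ (0 : ℝ), φ t ≠ 0 → diniDeriv (fun τ => V (φ τ)) t ≤ -α ‖h (φ t)‖)
    (hzsd : ∀ φ : ℝ → Fin n → ℝ, IsSolution f φ →
      (∀ t ≥ (0 : ℝ), h (φ t) = 0) → Tendsto φ atTop (nhds 0)) :
    -- Lyapunov stability of the origin
    (∀ ε > (0 : ℝ), ∃ δ > (0 : ℝ), ∀ φ : ℝ → Fin n → ℝ, IsSolution f φ →
      ‖φ 0‖ < δ → ∀ t ≥ (0 : ℝ), ‖φ t‖ < ε) ∧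
    -- global attractivity of the origin
    (∀ φ : ℝ → Fin n → ℝ, IsSolution f φ → Tendsto φ atTop (nhds 0)) :=
  stmt_16_general f hf V hV αl αu α hαl hαu hα h hbound hdini hzsd
end

section
/- Let F be Hurwitz with FᵀP + PF = −2Υ, Υ ≻ 0, P ≻ 0, and let B ∈ ℝⁿˣⁿ, g ∈ ℝⁿ, M = CF⁻¹, k_p, k_i > 0, and sat the saturation to [u̲, ū] with u_ss ∈ [u̲, ū]. Along solutions of the closed-loop system ẋ̃ = Fx̃ + (Bx̃ + g)v, ż̃ = −M(Bx̃ + g)v, with v = sat(u_ss + φ̃) − u_ss and φ̃ = −(k_p x̃ᵀP − k_i z̃ M)(Bx̃ + g), the Lyapunov function V = k_p x̃ᵀPx̃ + k_i z̃² satisfies V̇ ≤ −2k_p x̃ᵀΥx̃ ≤ 0. -/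
open Matrix

/-- A real square matrix is Hurwitz if all its (complex) eigenvalues
have strictly negative real part. -/
def IsHurwitz {n : ℕ} (M : Matrix (Fin n) (Fin n) ℝ) : Prop :=
  ∀ μ ∈ spectrum ℂ (M.map (algebraMap ℝ ℂ)), μ.re < 0

lemma mul_sat_add_sub_nonneg {ul ub u : ℝ} (hu : u ∈ Set.Icc ul ub) (s : ℝ) :
    0 ≤ s * (sat ul ub (u + s) - u) := by
  obtain ⟨hlu, hub⟩ := hu
  unfold sat
  split_ifs <;> nlinarith [mul_self_nonneg s]

theorem Matrix.IsSymm.dotProduct_mulVec_comm {R ι : Type*} [CommSemiring R] [Fintype ι]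
    {P : Matrix ι ι R} (hP : P.IsSymm) (u w : ι → R) : u ⬝ᵥ P *ᵥ w = w ⬝ᵥ P *ᵥ u := by
  rw [dotProduct_mulVec, dotProduct_comm, ← mulVec_transpose, hP.eq]

theorem dotProduct_mulVec_mulVec_of_lyapunov {K ι : Type*} [Field K] [NeZero (2 : K)]
    [Fintype ι] {F P Υ : Matrix ι ι K} (hP : P.IsSymm)
    (hLyap : Fᵀ * P + P * F = -((2 : K) • Υ)) (y : ι → K) :
    y ⬝ᵥ P *ᵥ (F *ᵥ y) = -(y ⬝ᵥ Υ *ᵥ y) := by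
  have h : y ⬝ᵥ (Fᵀ * P + P * F) *ᵥ y = 2 * (y ⬝ᵥ P *ᵥ (F *ᵥ y)) := by
    rw [add_mulVec, dotProduct_add, ← mulVec_mulVec, ← mulVec_mulVec, dotProduct_mulVec y Fᵀ,
      vecMul_transpose, hP.dotProduct_mulVec_comm (F *ᵥ y)]
    ring
  rw [hLyap, neg_mulVec, smul_mulVec, dotProduct_neg, dotProduct_smul, smul_eq_mul] at h
  exact mul_left_cancel₀ two_ne_zero (by linear_combination -h)

section Calculus

variable {𝕜 ι κ : Type*} [NontriviallyNormedField 𝕜] [Fintype ι] {f g : 𝕜 → ι → 𝕜}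
  {f' g' : ι → 𝕜} {t : 𝕜}

theorem HasDerivAt.dotProduct (hf : HasDerivAt f f' t) (hg : HasDerivAt g g' t) :
    HasDerivAt (fun τ => f τ ⬝ᵥ g τ) (f' ⬝ᵥ g t + f t ⬝ᵥ g') t := by
  simp only [_root_.dotProduct, ← Finset.sum_add_distrib]
  exact HasDerivAt.fun_sum fun i _ => (hasDerivAt_pi.1 hf i).mul (hasDerivAt_pi.1 hg i)

theorem HasDerivAt.mulVec (A : Matrix κ ι 𝕜) (hf : HasDerivAt f f' t) :
    HasDerivAt (fun τ => A *ᵥ f τ) (A *ᵥ f') t :=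
  hasDerivAt_pi.2 fun i => by
    simpa [Matrix.mulVec] using (hasDerivAt_const t (A i)).dotProduct hf

theorem HasDerivAt.dotProduct_mulVec_self {P : Matrix ι ι 𝕜} (hP : P.IsSymm)
    (hf : HasDerivAt f f' t) :
    HasDerivAt (fun τ => f τ ⬝ᵥ P *ᵥ f τ) (2 * (f t ⬝ᵥ P *ᵥ f')) t := by
  refine (hf.dotProduct (hf.mulVec P)).congr_deriv ?_
  rw [hP.dotProduct_mulVec_comm]
  ring

end Calculus

theorem stmt_18_general {n : ℕ} (F B P Υ : Matrix (Fin n) (Fin n) ℝ)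
    (g M : Fin n → ℝ) (kp ki ul ub uss : ℝ)
    (hP : P.PosDef) (hΥ : Υ.PosDef)
    (hLyap : Fᵀ * P + P * F = -((2 : ℝ) • Υ))
    (hkp : 0 < kp)
    (huss : uss ∈ Set.Icc ul ub)
    (x : ℝ → Fin n → ℝ) (z : ℝ → ℝ)
    (φt v : ℝ → ℝ)
    (hφ : ∀ t : ℝ, φt t =
      -(kp * ((x t) ⬝ᵥ P.mulVec (B.mulVec (x t) + g)) - ki * z t * (M ⬝ᵥ (B.mulVec (x t) + g))))
    (hv : ∀ t : ℝ, v t = sat ul ub (uss + φt t) - uss)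
    (hx : ∀ t : ℝ, HasDerivAt x (F.mulVec (x t) + v t • (B.mulVec (x t) + g)) t)
    (hz : ∀ t : ℝ, HasDerivAt z (-(v t * (M ⬝ᵥ (B.mulVec (x t) + g)))) t) :
    ∀ t : ℝ, ∃ d : ℝ,
      HasDerivAt (fun τ => kp * ((x τ) ⬝ᵥ P.mulVec (x τ)) + ki * (z τ) ^ 2) d t ∧
      d ≤ -2 * kp * ((x t) ⬝ᵥ Υ.mulVec (x t)) ∧
      -2 * kp * ((x t) ⬝ᵥ Υ.mulVec (x t)) ≤ 0 := by
  intro t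
  have hPsymm : P.IsSymm := isHermitian_iff_isSymm.1 hP.isHermitian
  have hV := (((hx t).dotProduct_mulVec_self hPsymm).const_mul kp).add
    (((hz t).fun_pow 2).const_mul ki)
  refine ⟨-2 * kp * (x t ⬝ᵥ Υ *ᵥ x t) - 2 * (φt t * v t), hV.congr_deriv ?_, ?_, ?_⟩
  · rw [mulVec_add, mulVec_smul, dotProduct_add, dotProduct_smul,
      dotProduct_mulVec_mulVec_of_lyapunov hPsymm hLyap, hφ t, smul_eq_mul]
    push_cast
    ring
  · have hsat : 0 ≤ φt t * v t := hv t ▸ mul_sat_add_sub_nonneg huss (φt t)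
    linarith
  · have hΥx : 0 ≤ x t ⬝ᵥ Υ *ᵥ x t := by simpa using hΥ.posSemidef.re_dotProduct_nonneg (x t)
    linarith [mul_nonneg hkp.le hΥx]

theorem stmt_18 {n : ℕ} (F B P Υ : Matrix (Fin n) (Fin n) ℝ)
    (g C M : Fin n → ℝ) (kp ki ul ub uss : ℝ)
    (hF : IsHurwitz F) (hP : P.PosDef) (hΥ : Υ.PosDef)
    (hLyap : Fᵀ * P + P * F = -((2 : ℝ) • Υ))
    (hM : M = C ᵥ* F⁻¹) (hkp : 0 < kp) (hki : 0 < ki)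
    (hul : ul ≤ ub) (huss : uss ∈ Set.Icc ul ub)
    (x : ℝ → Fin n → ℝ) (z : ℝ → ℝ)
    (φt v : ℝ → ℝ)
    (hφ : ∀ t : ℝ, φt t =
      -(kp * ((x t) ⬝ᵥ P.mulVec (B.mulVec (x t) + g)) - ki * z t * (M ⬝ᵥ (B.mulVec (x t) + g))))
    (hv : ∀ t : ℝ, v t = sat ul ub (uss + φt t) - uss)
    (hx : ∀ t : ℝ, HasDerivAt x (F.mulVec (x t) + v t • (B.mulVec (x t) + g)) t)
    (hz : ∀ t : ℝ, HasDerivAt z (-(v t * (M ⬝ᵥ (B.mulVec (x t) + g)))) t) :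
    ∀ t : ℝ, ∃ d : ℝ,
      HasDerivAt (fun τ => kp * ((x τ) ⬝ᵥ P.mulVec (x τ)) + ki * (z τ) ^ 2) d t ∧
      d ≤ -2 * kp * ((x t) ⬝ᵥ Υ.mulVec (x t)) ∧
      -2 * kp * ((x t) ⬝ᵥ Υ.mulVec (x t)) ≤ 0 :=
  stmt_18_general F B P Υ g M kp ki ul ub uss hP hΥ hLyap hkp huss x z φt v hφ hv hx hz
end
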